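/- Let (Nᵢ)_{i=0}^n be a square-integrable martingale with N₀ = 0 relative to a filtration (𝒢ᵢ), and define Wᵢ = Σ_{j=1}^i ( E[(N_j − N_{j−1})² | 𝒢_{j−1}] + (N_j − N_{j−1})² ) and Uᵢ = exp(ξNᵢ − (ξ²/2)Wᵢ) for ξ > 0. Then (Uᵢ) is a supermartingale: E[Uᵢ | 𝒢_{i−1}] ≤ U_{i−1} for each 1 ≤ i ≤ n. -/

import Mathlib

/-!
With `D = N k - N (k - 1)` and `c = E[D² | 𝒢 (k - 1)]` one has
`U k = U (k - 1) * exp (ξ D - ξ²/2 (D² + c))`, and `U (k - 1)` is `𝒢 (k - 1)`-measurable, so it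
suffices that the last factor has conditional expectation at most `1`. The elementary bound
`exp (x - x²/2) ≤ 1 + x + x²/2` and `E[D | 𝒢 (k - 1)] = 0` give
`E[exp (ξ D - ξ²/2 D²) | 𝒢 (k - 1)] ≤ 1 + ξ²/2 c ≤ exp (ξ²/2 c)`.
Since `x - x²/2 ≤ 1/2`, these exponentials are bounded, hence integrable. If `U k` itself is not
integrable, its conditional expectation is `0` by convention and the claim is trivial.
-/

open MeasureTheory Real

theorem Real.exp_sub_sq_div_two_le (x : ℝ) : exp (x - x ^ 2 / 2) ≤ 1 + x + x ^ 2 / 2 := by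
  have hq : 0 < 1 + x + x ^ 2 / 2 := by nlinarith [sq_nonneg (x + 1)]
  -- `(1 - x + x²/2)(1 + x + x²/2) = 1 + x⁴/4`
  have key : 1 ≤ exp (x ^ 2 / 2 - x) * (1 + x + x ^ 2 / 2) :=
    calc 1 ≤ (x ^ 2 / 2 - x + 1) * (1 + x + x ^ 2 / 2) := by nlinarith [sq_nonneg (x ^ 2)]
      _ ≤ exp (x ^ 2 / 2 - x) * (1 + x + x ^ 2 / 2) := by gcongr; exact add_one_le_exp _
  rw [show x - x ^ 2 / 2 = -(x ^ 2 / 2 - x) by ring, exp_neg]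
  exact inv_le_of_inv_le₀ hq ((inv_le_iff_one_le_mul₀ hq).2 key)

namespace MeasureTheory

section CondExp

variable {Ω : Type*} {m m0 : MeasurableSpace Ω} {μ : Measure Ω} [IsFiniteMeasure μ] {D : Ω → ℝ}

theorem integrable_exp_of_ae_le {f : Ω → ℝ} (hf : AEStronglyMeasurable f μ) {C : ℝ}
    (hC : ∀ᵐ ω ∂μ, f ω ≤ C) : Integrable (fun ω => exp (f ω)) μ := by
  refine Integrable.mono' (integrable_const (exp C))
    (continuous_exp.comp_aestronglyMeasurable hf) ?_
  filter_upwards [hC] with ω hω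
  rw [norm_of_nonneg (exp_pos _).le]
  exact exp_le_exp.2 hω

theorem integrable_exp_mul_sub_sq (hD : AEStronglyMeasurable D μ) (ξ : ℝ) :
    Integrable (fun ω => exp (ξ * D ω - ξ ^ 2 / 2 * D ω ^ 2)) μ :=
  integrable_exp_of_ae_le (by fun_prop) (C := 1 / 2) <| ae_of_all _ fun ω => by
    nlinarith [sq_nonneg (ξ * D ω - 1)]

theorem integrable_exp_mul_sub_sq_add_condExp (hm : m ≤ m0) (hD : AEStronglyMeasurable D μ)
    (ξ : ℝ) :
    Integrable (fun ω => exp (ξ * D ω - ξ ^ 2 / 2 * (D ω ^ 2 + μ[fun ω => D ω ^ 2 | m] ω))) μ := by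
  have hc := (stronglyMeasurable_condExp (m := m) (μ := μ) (f := fun ω => D ω ^ 2)).mono hm
  refine integrable_exp_of_ae_le (by fun_prop) (C := 1 / 2) ?_
  filter_upwards [condExp_nonneg (m := m) (ae_of_all μ fun ω => sq_nonneg (D ω))] with ω hω
  nlinarith [sq_nonneg (ξ * D ω - 1), mul_nonneg (sq_nonneg ξ) hω]

theorem condExp_exp_mul_sub_sq_le (hm : m ≤ m0) (hD : MemLp D 2 μ) (hD0 : μ[D | m] =ᵐ[μ] 0)
    (ξ : ℝ) :
    μ[fun ω => exp (ξ * D ω - ξ ^ 2 / 2 * D ω ^ 2) | m]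
      ≤ᵐ[μ] fun ω => 1 + ξ ^ 2 / 2 * μ[fun ω => D ω ^ 2 | m] ω := by
  have hDi : Integrable D μ := hD.integrable one_le_two
  have hD2i : Integrable (fun ω => D ω ^ 2) μ := hD.integrable_sq
  have hmono : μ[fun ω => exp (ξ * D ω - ξ ^ 2 / 2 * D ω ^ 2) | m]
      ≤ᵐ[μ] μ[(fun _ => 1) + ξ • D + (ξ ^ 2 / 2) • fun ω => D ω ^ 2 | m] :=
    condExp_mono (integrable_exp_mul_sub_sq hD.aestronglyMeasurable ξ)
      (((integrable_const 1).add (hDi.smul ξ)).add (hD2i.smul (ξ ^ 2 / 2)))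
      (ae_of_all _ fun ω => by
        show _ ≤ 1 + ξ * D ω + ξ ^ 2 / 2 * D ω ^ 2
        convert exp_sub_sq_div_two_le (ξ * D ω) using 2 <;> ring)
  filter_upwards [hmono,
    condExp_add ((integrable_const 1).add (hDi.smul ξ)) (hD2i.smul (ξ ^ 2 / 2)) m,
    condExp_add (integrable_const 1) (hDi.smul ξ) m, condExp_smul ξ D m,
    condExp_smul (ξ ^ 2 / 2) (fun ω => D ω ^ 2) m, hD0]
    with ω hle hadd hadd' hsmul hsmul' hzero
  simpa only [hadd, hadd', hsmul, hsmul', hzero, Pi.add_apply, Pi.smul_apply,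
    condExp_const hm, smul_eq_mul, Pi.zero_apply, mul_zero, add_zero] using hle

theorem condExp_exp_mul_sub_sq_add_condExp_le_one (hm : m ≤ m0) (hD : MemLp D 2 μ)
    (hD0 : μ[D | m] =ᵐ[μ] 0) (ξ : ℝ) :
    μ[fun ω => exp (ξ * D ω - ξ ^ 2 / 2 * (D ω ^ 2 + μ[fun ω => D ω ^ 2 | m] ω)) | m]
      ≤ᵐ[μ] 1 := by
  set c := μ[fun ω => D ω ^ 2 | m]
  have hsplit : (fun ω => exp (ξ * D ω - ξ ^ 2 / 2 * (D ω ^ 2 + c ω))) =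
      (fun ω => exp (-(ξ ^ 2 / 2 * c ω))) * fun ω => exp (ξ * D ω - ξ ^ 2 / 2 * D ω ^ 2) := by
    ext ω
    rw [Pi.mul_apply, ← exp_add]
    ring_nf
  have hc : StronglyMeasurable[m] fun ω => exp (-(ξ ^ 2 / 2 * c ω)) :=
    continuous_exp.comp_stronglyMeasurable (stronglyMeasurable_condExp.const_mul _).neg
  rw [hsplit]
  filter_upwards [condExp_mul_of_stronglyMeasurable_left hc
      (hsplit ▸ integrable_exp_mul_sub_sq_add_condExp hm hD.aestronglyMeasurable ξ)
      (integrable_exp_mul_sub_sq hD.aestronglyMeasurable ξ),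
    condExp_exp_mul_sub_sq_le hm hD hD0 ξ] with ω hpull hle
  rw [hpull, Pi.mul_apply]
  calc exp (-(ξ ^ 2 / 2 * c ω)) * _ ≤ exp (-(ξ ^ 2 / 2 * c ω)) * exp (ξ ^ 2 / 2 * c ω) := by
        gcongr
        exact hle.trans (by linarith [add_one_le_exp (ξ ^ 2 / 2 * c ω)])
    _ = 1 := by rw [← exp_add, neg_add_cancel, exp_zero]

end CondExp

section Martingale

variable {Ω : Type*} {m0 : MeasurableSpace Ω} {μ : Measure Ω} {𝒢 : Filtration ℕ m0}
  {N : ℕ → Ω → ℝ}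

theorem Martingale.condExp_sub_ae_eq_zero [IsFiniteMeasure μ] (hN : Martingale N 𝒢 μ) {i j : ℕ}
    (hij : i ≤ j) : μ[N j - N i | 𝒢 i] =ᵐ[μ] 0 := by
  filter_upwards [condExp_sub (hN.integrable j) (hN.integrable i) (𝒢 i), hN.condExp_ae_eq hij]
    with ω hsub hj
  rw [hsub, Pi.sub_apply, hj, Pi.zero_apply,
    condExp_of_stronglyMeasurable (𝒢.le i) (hN.stronglyAdapted i) (hN.integrable i), sub_self]

theorem StronglyAdapted.sum_condExp_sq_add_sq (hN : StronglyAdapted 𝒢 N) :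
    StronglyAdapted 𝒢 fun i ω => ∑ j ∈ Finset.Icc 1 i,
      (μ[fun ω' => (N j ω' - N (j - 1) ω') ^ 2 | 𝒢 (j - 1)] ω + (N j ω - N (j - 1) ω) ^ 2) := by
  intro i
  refine Finset.stronglyMeasurable_fun_sum _ fun j hj => ?_
  have hji : j ≤ i := (Finset.mem_Icc.1 hj).2
  exact (stronglyMeasurable_condExp.mono (𝒢.mono (by omega))).add
    ((((hN j).mono (𝒢.mono hji)).sub ((hN (j - 1)).mono (𝒢.mono (by omega)))).pow 2)

end Martingale

end MeasureTheory

theorem exp_process_supermartingale_general {Ω : Type*} {m0 : MeasurableSpace Ω}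
    (μ : Measure Ω) [IsProbabilityMeasure μ] (𝒢 : Filtration ℕ m0)
    (n : ℕ) (N : ℕ → Ω → ℝ) (hN : Martingale N 𝒢 μ)
    (hL2 : ∀ i, MemLp (N i) 2 μ)
    (W : ℕ → Ω → ℝ)
    (hW : ∀ i ω, W i ω = ∑ j ∈ Finset.Icc 1 i,
      ((μ[fun ω' => (N j ω' - N (j - 1) ω') ^ 2 | 𝒢 (j - 1)]) ω
        + (N j ω - N (j - 1) ω) ^ 2))
    (ξ : ℝ)
    (U : ℕ → Ω → ℝ)
    (hU : ∀ i ω, U i ω = Real.exp (ξ * N i ω - ξ ^ 2 / 2 * W i ω)) :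
    ∀ i, 1 ≤ i → i ≤ n →
      (μ[U i | 𝒢 (i - 1)]) ≤ᵐ[μ] U (i - 1) := by
  intro i hi _
  obtain ⟨k, rfl⟩ := Nat.exists_eq_add_of_le' hi
  rw [Nat.add_sub_cancel]
  have hU_pos : ∀ ω, 0 < U k ω := fun ω => hU k ω ▸ exp_pos _
  by_cases hint : Integrable (U (k + 1)) μ
  swap
  · rw [condExp_of_not_integrable hint]
    exact ae_of_all _ fun ω => (hU_pos ω).le
  set D : Ω → ℝ := N (k + 1) - N k with hD_def
  have hsplit : U (k + 1) = U k * fun ω =>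
      exp (ξ * D ω - ξ ^ 2 / 2 * (D ω ^ 2 + μ[fun ω => D ω ^ 2 | 𝒢 k] ω)) := by
    ext ω
    rw [Pi.mul_apply, hU, hU, hW, hW, Finset.sum_Icc_succ_top (by omega), ← exp_add,
      Nat.add_sub_cancel]
    congr 1
    simp only [hD_def, Pi.sub_apply]
    ring
  have hUk : StronglyMeasurable[𝒢 k] (U k) := by
    rw [funext (hU k), funext (hW k)]
    exact continuous_exp.comp_stronglyMeasurable (((hN.stronglyAdapted k).const_mul ξ).sub
      ((hN.stronglyAdapted.sum_condExp_sq_add_sq (μ := μ) k).const_mul _))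
  have hD : MemLp D 2 μ := (hL2 (k + 1)).sub (hL2 k)
  rw [hsplit] at hint ⊢
  filter_upwards [condExp_mul_of_stronglyMeasurable_left hUk hint
      (integrable_exp_mul_sub_sq_add_condExp (𝒢.le k) hD.aestronglyMeasurable ξ),
    condExp_exp_mul_sub_sq_add_condExp_le_one (𝒢.le k) hD
      (hN.condExp_sub_ae_eq_zero k.le_succ) ξ] with ω hpull hle
  rw [hpull, Pi.mul_apply]
  exact mul_le_of_le_one_right (hU_pos ω).le hle

/-- The exponential process `U i = exp(ξ N_i - (ξ²/2) W_i)` associated to a square-integrable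
martingale `N` with `N 0 = 0` is a supermartingale:
`E[U_i | 𝒢_{i-1}] ≤ U_{i-1}` for every `1 ≤ i ≤ n`. -/
theorem exp_process_supermartingale {Ω : Type*} {m0 : MeasurableSpace Ω}
    (μ : Measure Ω) [IsProbabilityMeasure μ] (𝒢 : Filtration ℕ m0)
    (n : ℕ) (N : ℕ → Ω → ℝ) (hN : Martingale N 𝒢 μ) (hN0 : N 0 = 0)
    (hL2 : ∀ i, MemLp (N i) 2 μ)
    (W : ℕ → Ω → ℝ)
    (hW : ∀ i ω, W i ω = ∑ j ∈ Finset.Icc 1 i,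
      ((μ[fun ω' => (N j ω' - N (j - 1) ω') ^ 2 | 𝒢 (j - 1)]) ω
        + (N j ω - N (j - 1) ω) ^ 2))
    (ξ : ℝ) (hξ : 0 < ξ)
    (U : ℕ → Ω → ℝ)
    (hU : ∀ i ω, U i ω = Real.exp (ξ * N i ω - ξ ^ 2 / 2 * W i ω)) :
    ∀ i, 1 ≤ i → i ≤ n →
      (μ[U i | 𝒢 (i - 1)]) ≤ᵐ[μ] U (i - 1) :=
  exp_process_supermartingale_general μ 𝒢 n N hN hL2 W hW ξ U hU
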